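/- Define Ẽ_s(β) = -∫₀^β F̃_s(b)/(b²-1) db where the F̃_s are the polynomials from the recursion F̃₁(β)=(4ν²-1)(β²-1)/8, F̃₂(β)=(4ν²-1)β(β²-1)/8, F̃_{s+1}=((β²-1)/2)F̃_s' - (1/2)Σ_{j=1}^{s-1}F̃_jF̃_{s-j}. Then each Ẽ_s is a polynomial in β (the integrand is a polynomial since (b²-1) divides F̃_s), and Ẽ_{2s} is an even polynomial while Ẽ_{2s+1} is an odd polynomial. -/
import Mathlib


open Polynomial Finset
open intervalIntegral MeasureTheory

lemma poly_antideriv (G : Polynomial ℝ) : ∃ P : Polynomial ℝ,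
    P.derivative = G ∧ P.eval 0 = 0 := by
  induction G using Polynomial.induction_on' with
  | add p q hp hq =>
    obtain ⟨P, hP, hP0⟩ := hp
    obtain ⟨Q, hQ, hQ0⟩ := hq
    exact ⟨P + Q, by simp [hP, hQ], by simp [hP0, hQ0]⟩
  | monomial n a =>
    refine ⟨C (a / (n + 1)) * X ^ (n + 1), ?_, by simp⟩
    rw [derivative_C_mul, derivative_X_pow, C_eq_natCast, ← C_mul_X_pow_eq_monomial]
    push_cast
    simp only [add_tsub_cancel_right, ← mul_assoc]
    rw [show ((n : Polynomial ℝ) + 1) = C ((n : ℝ) + 1) by simp,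
      ← C_mul, div_mul_cancel₀ _ (by positivity : ((n:ℝ)+1) ≠ 0)]

lemma F_key (ν : ℝ) (F : ℕ → Polynomial ℝ)
    (h1 : F 1 = Polynomial.C ((4 * ν ^ 2 - 1) / 8) * (Polynomial.X ^ 2 - 1))
    (h2 : F 2 = Polynomial.C ((4 * ν ^ 2 - 1) / 8) * Polynomial.X * (Polynomial.X ^ 2 - 1))
    (hrec : ∀ s : ℕ, 2 ≤ s →
      F (s + 1) = Polynomial.C (1 / 2 : ℝ) * (Polynomial.X ^ 2 - 1) * (F s).derivative
        - Polynomial.C (1 / 2 : ℝ) * ∑ j ∈ Finset.Ico 1 s, F j * F (s - j)) :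
    ∀ s : ℕ, 1 ≤ s → ((X ^ 2 - 1 : Polynomial ℝ) ∣ F s) ∧
      (F s).comp (-X) = (-1 : Polynomial ℝ) ^ (s + 1) * F s := by
  intro s
  induction s using Nat.strong_induction_on with
  | _ s ih =>
  intro hs
  match s, hs with
  | 1, _ => refine ⟨⟨_, h1.trans (mul_comm _ _)⟩, ?_⟩; rw [h1]; simp
  | 2, _ => refine ⟨⟨C ((4 * ν ^ 2 - 1) / 8) * X, by rw [h2]; ring⟩, ?_⟩
            rw [h2]; simp; ring
  | (t+3), _ =>
    have ht : 2 ≤ t + 2 := by omega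
    have iht := ih (t+2) (by omega) (by omega)
    have hdvd : (X ^ 2 - 1 : Polynomial ℝ) ∣ F (t+3) := by
      rw [show t+3 = (t+2)+1 by ring, hrec (t+2) ht]
      apply dvd_sub
      · exact Dvd.dvd.mul_right (Dvd.dvd.mul_left dvd_rfl _) _
      · apply Dvd.dvd.mul_left
        apply Finset.dvd_sum
        intro j hj
        rw [Finset.mem_Ico] at hj
        exact ((ih j (by omega) (by omega)).1).mul_right _
    refine ⟨hdvd, ?_⟩
    have hder : ((F (t+2)).derivative).comp (-X)
        = (-1 : Polynomial ℝ) ^ (t+2) * (F (t+2)).derivative := by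
      have h0 := congrArg derivative iht.2
      rw [derivative_comp] at h0
      simp only [derivative_neg, derivative_X, derivative_mul, derivative_pow,
        derivative_one] at h0
      have h2' : (-1 : Polynomial ℝ) * ((F (t+2)).derivative).comp (-X)
          = (-1) ^ (t + 2 + 1) * (F (t+2)).derivative := by
        simpa using h0
      have h3 := congrArg (fun p => (-1 : Polynomial ℝ) * p) h2'
      simp only [← mul_assoc, neg_mul, one_mul, neg_neg] at h3
      rw [h3, pow_succ]
      ring
    have hsum : ∑ j ∈ Finset.Ico 1 (t+2), (F j).comp (-X) * (F (t+2-j)).comp (-X)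
        = (-1 : Polynomial ℝ) ^ (t+2) * ∑ j ∈ Finset.Ico 1 (t+2), F j * F (t+2 - j) := by
      rw [Finset.mul_sum]
      apply Finset.sum_congr rfl
      intro j hj
      rw [Finset.mem_Ico] at hj
      rw [(ih j (by omega) (by omega)).2, (ih (t+2 - j) (by omega) (by omega)).2]
      rw [show (-1 : Polynomial ℝ) ^ (j + 1) * F j * ((-1) ^ (t+2 - j + 1) * F (t+2 - j))
          = (-1) ^ ((j + 1) + (t+2 - j + 1)) * (F j * F (t+2 - j)) by rw [pow_add]; ring]
      rw [show (j + 1) + (t+2 - j + 1) = (t+2) + 2 by omega, pow_add]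
      ring
    rw [show t+3 = (t+2)+1 by ring, hrec (t+2) ht]
    simp only [sub_comp, mul_comp, Polynomial.sum_comp, pow_comp, C_comp, neg_comp, X_comp, one_comp]
    rw [hder, hsum, show (t+2)+1+1 = (t+2)+2 by ring, pow_add]
    ring

/-- With `F̃_s` as in the recursion `F̃₁(β)=(4ν²-1)(β²-1)/8`,
`F̃₂(β)=(4ν²-1)β(β²-1)/8`, `F̃_{s+1}=((β²-1)/2)F̃_s' - (1/2)Σ_{j=1}^{s-1}F̃_jF̃_{s-j}`,
the function `Ẽ_s(β) = -∫₀^β F̃_s(b)/(b²-1) db` is a polynomial in `β`, even for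
even `s` and odd for odd `s`. -/
theorem Etilde_polynomial_parity (ν : ℝ) (F : ℕ → Polynomial ℝ)
    (h1 : F 1 = Polynomial.C ((4 * ν ^ 2 - 1) / 8) * (Polynomial.X ^ 2 - 1))
    (h2 : F 2 = Polynomial.C ((4 * ν ^ 2 - 1) / 8) * Polynomial.X * (Polynomial.X ^ 2 - 1))
    (hrec : ∀ s : ℕ, 2 ≤ s →
      F (s + 1) = Polynomial.C (1 / 2 : ℝ) * (Polynomial.X ^ 2 - 1) * (F s).derivative
        - Polynomial.C (1 / 2 : ℝ) * ∑ j ∈ Finset.Ico 1 s, F j * F (s - j)) :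
    ∀ s : ℕ, 1 ≤ s → ∃ E : Polynomial ℝ,
      (∀ β : ℝ, E.eval β = -∫ b in (0 : ℝ)..β, (F s).eval b / (b ^ 2 - 1)) ∧
      (Even s → ∀ β : ℝ, E.eval (-β) = E.eval β) ∧
      (Odd s → ∀ β : ℝ, E.eval (-β) = -E.eval β) := by
  intro s hs
  have hkey := F_key ν F h1 h2 hrec s hs
  obtain ⟨G, hG⟩ := hkey.1
  have hX2 : (X ^ 2 - 1 : Polynomial ℝ) ≠ 0 := by
    intro h
    have := congrArg (Polynomial.eval 0) h
    simp at this
  have hGpar : G.comp (-X) = (-1 : Polynomial ℝ) ^ (s + 1) * G := by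
    apply mul_left_cancel₀ hX2
    have h0 := hkey.2
    rw [hG, mul_comp, sub_comp, pow_comp, X_comp, one_comp] at h0
    rw [show ((-X : Polynomial ℝ) ^ 2 - 1) = X ^ 2 - 1 by ring] at h0
    rw [h0]; ring
  obtain ⟨P, hP, hP0⟩ := poly_antideriv G
  -- FTC
  have hint : ∀ β : ℝ, (∫ b in (0:ℝ)..β, G.eval b) = P.eval β := by
    intro β
    have : (∫ b in (0:ℝ)..β, G.eval b) = P.eval β - P.eval 0 := by
      apply intervalIntegral.integral_deriv_eq_sub' (fun x => P.eval x)
      · funext x; rw [Polynomial.deriv, hP]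
      · intro x _; exact P.differentiable.differentiableAt
      · exact (G.continuous.continuousOn)
    rw [this, hP0, sub_zero]
  -- a.e. equality of integrands
  have hae : ∀ β : ℝ, (∫ b in (0:ℝ)..β, (F s).eval b / (b ^ 2 - 1))
      = ∫ b in (0:ℝ)..β, G.eval b := by
    intro β
    apply intervalIntegral.integral_congr_ae
    have hsub : {b : ℝ | ¬ ((F s).eval b / (b ^ 2 - 1) = G.eval b)} ⊆ {-1, 1} := by
      intro b hb
      simp only [Set.mem_setOf_eq] at hb
      by_contra hb2
      apply hb
      have hne : b ^ 2 - 1 ≠ 0 := by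
        intro h
        have : b * b = 1 := by nlinarith
        rcases mul_self_eq_one_iff.1 this with h1 | h1 <;>
          exact hb2 (by simp [h1])
      rw [hG, eval_mul, eval_sub, eval_pow, eval_X, eval_one,
        mul_div_cancel_left₀ _ hne]
    have h0 : ∀ᵐ b : ℝ, (F s).eval b / (b ^ 2 - 1) = G.eval b :=
      MeasureTheory.ae_iff.2 (measure_mono_null hsub
        (Set.Finite.measure_zero (Set.toFinite _) _))
    exact h0.mono fun b hb _ => hb
  have hEeq : ∀ β : ℝ, (-P).eval β = -∫ b in (0:ℝ)..β, (F s).eval b / (b ^ 2 - 1) := by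
    intro β; rw [hae, hint, eval_neg]
  -- parity of P
  have hPpar : ∀ β : ℝ, P.eval (-β) = (-1 : ℝ) ^ s * P.eval β := by
    intro β
    have hGev : ∀ x : ℝ, G.eval (-x) = (-1 : ℝ) ^ (s+1) * G.eval x := by
      intro x
      have := congrArg (Polynomial.eval x) hGpar
      simpa [eval_comp] using this
    have h1 : (∫ x in (0:ℝ)..β, G.eval (-x)) = ∫ x in (-β:ℝ)..0, G.eval x := by
      simpa using intervalIntegral.integral_comp_neg (a := 0) (b := β) (f := fun x => G.eval x)
    have h2 : (∫ x in (0:ℝ)..β, G.eval (-x)) = (-1:ℝ)^(s+1) * ∫ x in (0:ℝ)..β, G.eval x := by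
      simp_rw [hGev]
      exact intervalIntegral.integral_const_mul _ _
    have h3 : (∫ x in (-β:ℝ)..0, G.eval x) = -∫ x in (0:ℝ)..(-β), G.eval x :=
      (intervalIntegral.integral_symm _ _)
    have := h1.symm.trans h2
    rw [h3, hint, hint] at this
    have : P.eval (-β) = -((-1:ℝ)^(s+1) * P.eval β) := by linarith
    rw [this, pow_succ]; ring
  refine ⟨-P, hEeq, ?_, ?_⟩
  · intro hsev β
    rw [eval_neg, eval_neg, hPpar, hsev.neg_one_pow, one_mul]
  · intro hsodd β
    rw [eval_neg, eval_neg, hPpar, hsodd.neg_one_pow]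
    ring
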